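/- arXiv:2508.00092 — 2 statements merged into one kernel-verified Lean document; each statement's English description precedes it below -/
import Mathlib

section
/- Let y : ℝ^d → ℝ and f : ℝ → ℝ be smooth, and let a_1, …, a_n ∈ {1, …, d} be indices (repetitions allowed). Then ∂_{a_n} ⋯ ∂_{a_1} f(y(x)) = Σ_{π ∈ P(n)} f^{(|π|)}(y(x)) · Π_{B ∈ π} (∂^{|B|} y / Π_{j ∈ B} ∂x^{a_j})(x), where for a block B = {j_1, …, j_k} the factor ∂^{|B|} y / Π_{j ∈ B} ∂x^{a_j} denotes the iterated partial derivative ∂_{a_{j_1}} ⋯ ∂_{a_{j_k}} y (order irrelevant by symmetry of partial derivatives). -/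
/-- Partial derivative of a real-valued function on `ℝ^d` with respect to the `a`-th
coordinate. -/
noncomputable def pderiv {d : ℕ} (a : Fin d) (g : (Fin d → ℝ) → ℝ) : (Fin d → ℝ) → ℝ :=
  fun x => fderiv ℝ g x (Pi.single a 1)

/-- Iterated partial derivative: for a list of indices `[a₁, …, a_k]`, applies `∂_{a₁}` first,
then `∂_{a₂}`, etc., giving `∂_{a_k} ⋯ ∂_{a₁} g`. -/
noncomputable def iterPDeriv {d : ℕ} (l : List (Fin d)) (g : (Fin d → ℝ) → ℝ) :
    (Fin d → ℝ) → ℝ :=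
  l.foldl (fun h c => pderiv c h) g

section Analytic
variable {d : ℕ}

lemma iterPDeriv_nil (g : (Fin d → ℝ) → ℝ) : iterPDeriv [] g = g := rfl

lemma iterPDeriv_cons (c : Fin d) (l : List (Fin d)) (g : (Fin d → ℝ) → ℝ) :
    iterPDeriv (c :: l) g = iterPDeriv l (pderiv c g) := rfl

lemma iterPDeriv_concat (l : List (Fin d)) (c : Fin d) (g : (Fin d → ℝ) → ℝ) :
    iterPDeriv (l ++ [c]) g = pderiv c (iterPDeriv l g) := by
  simp [iterPDeriv, List.foldl_append]

lemma contDiff_pderiv {g : (Fin d → ℝ) → ℝ} (hg : ContDiff ℝ (⊤ : ℕ∞) g) (a : Fin d) :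
    ContDiff ℝ (⊤ : ℕ∞) (pderiv a g) :=
  (hg.fderiv_right ((by simp))).clm_apply contDiff_const

lemma contDiff_iterPDeriv (l : List (Fin d)) {g : (Fin d → ℝ) → ℝ} (hg : ContDiff ℝ (⊤ : ℕ∞) g) :
    ContDiff ℝ (⊤ : ℕ∞) (iterPDeriv l g) := by
  induction l generalizing g with
  | nil => exact hg
  | cons c l ih => exact ih (contDiff_pderiv hg c)

lemma pderiv_sum {ι : Type*} (s : Finset ι) (g : ι → (Fin d → ℝ) → ℝ) (a : Fin d)
    (x : Fin d → ℝ) (hg : ∀ i ∈ s, DifferentiableAt ℝ (g i) x) :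
    pderiv a (fun t => ∑ i ∈ s, g i t) x = ∑ i ∈ s, pderiv a (g i) x := by
  unfold pderiv
  rw [fderiv_fun_sum hg]
  simp

lemma pderiv_mul {g h : (Fin d → ℝ) → ℝ} {x : Fin d → ℝ} (hg : DifferentiableAt ℝ g x)
    (hh : DifferentiableAt ℝ h x) (a : Fin d) :
    pderiv a (fun t => g t * h t) x = pderiv a g x * h x + g x * pderiv a h x := by
  unfold pderiv
  rw [fderiv_fun_mul hg hh]
  simp
  ring

lemma pderiv_comp {f : ℝ → ℝ} {y : (Fin d → ℝ) → ℝ} {x : Fin d → ℝ}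
    (hf : DifferentiableAt ℝ f (y x)) (hy : DifferentiableAt ℝ y x) (a : Fin d) :
    pderiv a (fun t => f (y t)) x = deriv f (y x) * pderiv a y x := by
  unfold pderiv
  have : (fun t => f (y t)) = f ∘ y := rfl
  rw [this, fderiv_comp x hf hy]
  simp only [ContinuousLinearMap.coe_comp', Function.comp_apply]
  have h1 : fderiv ℝ y x (Pi.single a 1) = (fderiv ℝ y x (Pi.single a 1)) • (1:ℝ) := by
    simp
  rw [h1, map_smul, smul_eq_mul, smul_eq_mul, mul_one, fderiv_apply_one_eq_deriv]
  ring

lemma pderiv_finset_prod {ι : Type*} [DecidableEq ι] (s : Finset ι)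
    (g : ι → (Fin d → ℝ) → ℝ) (a : Fin d) (x : Fin d → ℝ)
    (hg : ∀ i ∈ s, DifferentiableAt ℝ (g i) x) :
    pderiv a (fun t => ∏ i ∈ s, g i t) x
      = ∑ i ∈ s, pderiv a (g i) x * ∏ j ∈ s.erase i, g j x := by
  unfold pderiv
  rw [fderiv_finset_prod hg]
  simp [mul_comm]

section Sorting
variable {n : ℕ}


lemma sort_map_castSucc (B : Finset (Fin n)) :
    (B.map Fin.castSuccEmb).sort (· ≤ ·)
      = (B.sort (· ≤ ·)).map Fin.castSucc := by
  refine (fun hp h1 h2 => List.Perm.eq_of_pairwise' (r := ((· ≤ ·) : Fin (n+1) → Fin (n+1) → Prop)) h1 h2 hp) ?_ ?_ ?_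
  · rw [← Multiset.coe_eq_coe]
    simp only [Finset.map_val, Finset.sort_eq, ← Multiset.map_coe]
    rfl
  · exact Finset.pairwise_sort _ _
  · rw [List.pairwise_map]
    exact (B.pairwise_sort (· ≤ ·)).imp (fun h => Fin.castSucc_le_castSucc_iff.mpr h)

lemma sort_insert_last (C : Finset (Fin (n+1))) (h : Fin.last n ∉ C) :
    (insert (Fin.last n) C).sort (· ≤ ·) = C.sort (· ≤ ·) ++ [Fin.last n] := by
  refine (fun hp h1 h2 => List.Perm.eq_of_pairwise' (r := ((· ≤ ·) : Fin (n+1) → Fin (n+1) → Prop)) h1 h2 hp) ?_ ?_ ?_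
  · rw [← Multiset.coe_eq_coe]
    rw [Finset.sort_eq, Finset.insert_val_of_notMem h, ← Multiset.coe_add,
      Multiset.coe_singleton, Finset.sort_eq, ← Multiset.singleton_add]
    exact add_comm _ _
  · exact Finset.pairwise_sort _ _
  · rw [List.pairwise_append]
    refine ⟨Finset.pairwise_sort _ _, List.pairwise_singleton _ _, ?_⟩
    intro z hz w hw
    rw [List.mem_singleton] at hw
    subst hw
    exact Fin.le_last z

end Sorting

namespace MFdB
variable {n : ℕ}

/-- map a block of `Fin n` to `Fin (n+1)` via `castSucc`. -/
def mapB (B : Finset (Fin n)) : Finset (Fin (n+1)) := B.map Fin.castSuccEmb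

lemma mem_mapB {B : Finset (Fin n)} {z : Fin (n+1)} :
    z ∈ mapB B ↔ ∃ i ∈ B, Fin.castSucc i = z := by
  simp only [mapB, Finset.mem_map]
  constructor
  · rintro ⟨i, hi, rfl⟩; exact ⟨i, hi, rfl⟩
  · rintro ⟨i, hi, rfl⟩; exact ⟨i, hi, rfl⟩

lemma castSucc_mem_mapB {B : Finset (Fin n)} {i : Fin n} :
    Fin.castSucc i ∈ mapB B ↔ i ∈ B := by
  rw [mem_mapB]
  constructor
  · rintro ⟨j, hj, hji⟩
    rwa [← Fin.castSucc_injective n hji]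
  · exact fun h => ⟨i, h, rfl⟩

lemma last_not_mem_mapB (B : Finset (Fin n)) : Fin.last n ∉ mapB B := by
  rw [mem_mapB]
  rintro ⟨i, _, hi⟩
  exact (Fin.castSucc_lt_last i).ne hi

lemma mapB_injective : Function.Injective (mapB (n := n)) :=
  Finset.map_injective _

lemma mapB_nonempty {B : Finset (Fin n)} (h : B.Nonempty) : (mapB B).Nonempty :=
  Finset.map_nonempty.mpr h

/-- the embedding on blocks. -/
def embB : Finset (Fin n) ↪ Finset (Fin (n+1)) := ⟨mapB, mapB_injective⟩

noncomputable def pull (C : Finset (Fin (n+1))) : Finset (Fin n) :=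
  C.preimage Fin.castSucc (Fin.castSucc_injective n).injOn

lemma mem_pull {C : Finset (Fin (n+1))} {i : Fin n} :
    i ∈ pull C ↔ Fin.castSucc i ∈ C := Finset.mem_preimage

lemma mapB_pull {C : Finset (Fin (n+1))} (h : Fin.last n ∉ C) : mapB (pull C) = C := by
  ext z
  rw [mem_mapB]
  constructor
  · rintro ⟨i, hi, rfl⟩
    exact mem_pull.mp hi
  · intro hz
    have hne : z ≠ Fin.last n := fun hzL => h (hzL ▸ hz)
    obtain ⟨i, rfl⟩ := Fin.exists_castSucc_eq.mpr hne
    exact ⟨i, mem_pull.mpr hz, rfl⟩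

lemma pull_mapB (B : Finset (Fin n)) : pull (mapB B) = B := by
  ext i
  rw [mem_pull, castSucc_mem_mapB]

lemma pull_nonempty {C : Finset (Fin (n+1))} (hC : C.Nonempty) (h : Fin.last n ∉ C) :
    (pull C).Nonempty := by
  obtain ⟨z, hz⟩ := hC
  have hne : z ≠ Fin.last n := fun hzL => h (hzL ▸ hz)
  obtain ⟨i, rfl⟩ := Fin.exists_castSucc_eq.mpr hne
  exact ⟨i, mem_pull.mpr hz⟩

lemma disjoint_pull {C D : Finset (Fin (n+1))} (h : Disjoint C D) :
    Disjoint (pull C) (pull D) := by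
  rw [Finset.disjoint_left] at h ⊢
  intro i hi hi'
  exact h (mem_pull.mp hi) (mem_pull.mp hi')

/-- Extend a partition of `Fin n` to `Fin (n+1)` by adding `{last}` as a new singleton block. -/
def extN (π : Finpartition (Finset.univ : Finset (Fin n))) :
    Finpartition (Finset.univ : Finset (Fin (n+1))) where
  parts := insert {Fin.last n} (π.parts.map embB)
  supIndep := by
    rw [Finset.supIndep_iff_pairwiseDisjoint]
    intro C hC D hD hne
    simp only [Finset.coe_insert, Set.mem_insert_iff, Finset.mem_coe, Finset.mem_map] at hC hD
    obtain hC | ⟨B, hB, rfl⟩ := hC <;> obtain hD | ⟨B', hB', rfl⟩ := hD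
    · exact absurd (hC.trans hD.symm) hne
    · subst hC
      exact Finset.disjoint_singleton_left.mpr (last_not_mem_mapB B')
    · subst hD
      exact Finset.disjoint_singleton_right.mpr (last_not_mem_mapB B)
    · have hBB' : B ≠ B' := fun h => hne (by rw [h])
      have := π.disjoint hB hB' hBB'
      simp only [Function.onFun, id] at this ⊢
      show Disjoint (mapB B) (mapB B')
      unfold mapB
      exact (Finset.disjoint_map _).mpr this
  sup_parts := by
    ext z
    simp only [Finset.mem_sup, Finset.mem_insert, Finset.mem_univ, iff_true]
    by_cases hz : z = Fin.last n
    · exact ⟨{Fin.last n}, Or.inl rfl, by simp [hz]⟩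
    · obtain ⟨i, rfl⟩ := Fin.exists_castSucc_eq.mpr hz
      have : i ∈ π.parts.sup id := by rw [π.sup_parts]; exact Finset.mem_univ i
      rw [Finset.mem_sup] at this
      obtain ⟨B, hB, hiB⟩ := this
      exact ⟨mapB B, Or.inr (Finset.mem_map_of_mem embB hB),
        (castSucc_mem_mapB).mpr hiB⟩
  bot_notMem := by
    simp only [Finset.bot_eq_empty, Finset.mem_insert, Finset.mem_map]
    rintro (h | ⟨B, hB, hBe⟩)
    · exact (Finset.singleton_ne_empty _) h.symm
    · have : B = ∅ := Finset.map_eq_empty.mp hBe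
      rw [this] at hB
      exact π.bot_notMem hB

/-- Extend a partition of `Fin n` to `Fin (n+1)` by inserting `last` into block `B`. -/
def extS (π : Finpartition (Finset.univ : Finset (Fin n))) (B : Finset (Fin n))
    (hB : B ∈ π.parts) : Finpartition (Finset.univ : Finset (Fin (n+1))) where
  parts := insert (insert (Fin.last n) (mapB B)) ((π.parts.erase B).map embB)
  supIndep := by
    rw [Finset.supIndep_iff_pairwiseDisjoint]
    intro C hC D hD hne
    simp only [Finset.coe_insert, Set.mem_insert_iff, Finset.mem_coe, Finset.mem_map] at hC hD
    have key : ∀ B' ∈ π.parts.erase B,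
        Disjoint (insert (Fin.last n) (mapB B)) (mapB B') := by
      intro B' hB'
      rw [Finset.disjoint_insert_left]
      refine ⟨last_not_mem_mapB B', ?_⟩
      have hBB' : B ≠ B' := fun h => (Finset.ne_of_mem_erase hB') h.symm
      have := π.disjoint hB (Finset.mem_of_mem_erase hB') hBB'
      simp only [Function.onFun, id] at this
      unfold mapB
      exact (Finset.disjoint_map _).mpr this
    obtain hC | ⟨B', hB', rfl⟩ := hC <;> obtain hD | ⟨B'', hB'', rfl⟩ := hD
    · exact absurd (hC.trans hD.symm) hne
    · subst hC
      exact key B'' hB''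
    · subst hD
      exact (key B' hB').symm
    · have hBB' : B' ≠ B'' := fun h => hne (by rw [h])
      have := π.disjoint (Finset.mem_of_mem_erase hB') (Finset.mem_of_mem_erase hB'') hBB'
      simp only [Function.onFun, id] at this ⊢
      show Disjoint (mapB B') (mapB B'')
      unfold mapB
      exact (Finset.disjoint_map _).mpr this
  sup_parts := by
    ext z
    simp only [Finset.mem_sup, Finset.mem_insert, Finset.mem_univ, iff_true]
    by_cases hz : z = Fin.last n
    · exact ⟨_, Or.inl rfl, by simp [hz]⟩
    · obtain ⟨i, rfl⟩ := Fin.exists_castSucc_eq.mpr hz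
      have : i ∈ π.parts.sup id := by rw [π.sup_parts]; exact Finset.mem_univ i
      rw [Finset.mem_sup] at this
      obtain ⟨B', hB', hiB⟩ := this
      by_cases hBB : B' = B
      · subst hBB
        exact ⟨_, Or.inl rfl, Finset.mem_insert_of_mem ((castSucc_mem_mapB).mpr hiB)⟩
      · exact ⟨mapB B', Or.inr (Finset.mem_map_of_mem embB (Finset.mem_erase.mpr ⟨hBB, hB'⟩)),
          (castSucc_mem_mapB).mpr hiB⟩
  bot_notMem := by
    simp only [Finset.bot_eq_empty, Finset.mem_insert, Finset.mem_map]
    rintro (h | ⟨B', hB', hBe⟩)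
    · exact (Finset.insert_ne_empty _ _) h.symm
    · have : B' = ∅ := Finset.map_eq_empty.mp hBe
      rw [this] at hB'
      exact π.bot_notMem (Finset.mem_of_mem_erase hB')

lemma extN_parts (π : Finpartition (Finset.univ : Finset (Fin n))) :
    (extN π).parts = insert {Fin.last n} (π.parts.map embB) := rfl

lemma extS_parts (π : Finpartition (Finset.univ : Finset (Fin n))) (B) (hB : B ∈ π.parts) :
    (extS π B hB).parts
      = insert (insert (Fin.last n) (mapB B)) ((π.parts.erase B).map embB) := rfl

lemma embB_apply (B : Finset (Fin n)) : embB B = mapB B := rfl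

lemma not_mem_map_embB {S : Finset (Finset (Fin n))} {X : Finset (Fin (n+1))}
    (hX : Fin.last n ∈ X) : X ∉ S.map embB := by
  rw [Finset.mem_map]
  rintro ⟨B, _, rfl⟩
  exact last_not_mem_mapB B hX

lemma extN_card (π : Finpartition (Finset.univ : Finset (Fin n))) :
    (extN π).parts.card = π.parts.card + 1 := by
  rw [extN_parts, Finset.card_insert_of_notMem (not_mem_map_embB (Finset.mem_singleton_self _)),
    Finset.card_map]

lemma extS_card (π : Finpartition (Finset.univ : Finset (Fin n))) (B) (hB : B ∈ π.parts) :
    (extS π B hB).parts.card = π.parts.card := by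
  rw [extS_parts, Finset.card_insert_of_notMem (not_mem_map_embB (Finset.mem_insert_self _ _)),
    Finset.card_map, Finset.card_erase_of_mem hB]
  have := Finset.card_pos.mpr ⟨B, hB⟩
  omega

/-- The blocks of σ, with `last` removed and pulled back to `Fin n` (∅ may occur). -/
noncomputable def preparts (σ : Finpartition (Finset.univ : Finset (Fin (n+1)))) :
    Finset (Finset (Fin n)) :=
  σ.parts.image (fun C => pull (C.erase (Fin.last n)))

/-- Restriction of a partition of `Fin (n+1)` to `Fin n`. -/
noncomputable def res (σ : Finpartition (Finset.univ : Finset (Fin (n+1)))) :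
    Finpartition (Finset.univ : Finset (Fin n)) :=
  Finpartition.ofErase (preparts σ)
    (by
      rw [Finset.supIndep_iff_pairwiseDisjoint]
      intro D hD D' hD' hne
      simp only [preparts, Finset.coe_image, Set.mem_image, Finset.mem_coe] at hD hD'
      obtain ⟨C, hC, rfl⟩ := hD
      obtain ⟨C', hC', rfl⟩ := hD'
      have hCC' : C ≠ C' := fun h => hne (by rw [h])
      have hdisj := σ.disjoint hC hC' hCC'
      simp only [Function.onFun, id] at hdisj ⊢
      exact disjoint_pull (hdisj.mono (Finset.erase_subset _ _) (Finset.erase_subset _ _)))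
    (by
      ext i
      simp only [Finset.mem_sup, preparts, Finset.mem_image, Finset.mem_univ, iff_true]
      have : (Fin.castSucc i) ∈ σ.parts.sup id := by
        rw [σ.sup_parts]; exact Finset.mem_univ _
      rw [Finset.mem_sup] at this
      obtain ⟨C, hC, hiC⟩ := this
      refine ⟨pull (C.erase (Fin.last n)), ⟨C, hC, rfl⟩, ?_⟩
      simp only [id] at hiC ⊢
      rw [mem_pull, Finset.mem_erase]
      exact ⟨(Fin.castSucc_lt_last i).ne, hiC⟩)

lemma res_parts (σ : Finpartition (Finset.univ : Finset (Fin (n+1)))) :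
    (res σ).parts = (preparts σ).erase ∅ := by
  simp [res, Finpartition.ofErase]

lemma mem_res_parts {σ : Finpartition (Finset.univ : Finset (Fin (n+1)))}
    {D : Finset (Fin n)} :
    D ∈ (res σ).parts ↔ D ≠ ∅ ∧ ∃ C ∈ σ.parts, pull (C.erase (Fin.last n)) = D := by
  rw [res_parts, Finset.mem_erase]
  simp [preparts, Finset.mem_image]

lemma part_extN (π : Finpartition (Finset.univ : Finset (Fin n))) :
    (extN π).part (Fin.last n) = {Fin.last n} :=
  Finpartition.part_eq_of_mem _ (Finset.mem_insert_self _ _) (Finset.mem_singleton_self _)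

lemma part_extS (π : Finpartition (Finset.univ : Finset (Fin n))) (B) (hB : B ∈ π.parts) :
    (extS π B hB).part (Fin.last n) = insert (Fin.last n) (mapB B) :=
  Finpartition.part_eq_of_mem _ (Finset.mem_insert_self _ _) (Finset.mem_insert_self _ _)

lemma insert_last_ne_singleton {B : Finset (Fin n)} (hB : B.Nonempty) :
    insert (Fin.last n) (mapB B) ≠ {Fin.last n} := by
  intro h
  obtain ⟨i, hi⟩ := hB
  have : Fin.castSucc i ∈ ({Fin.last n} : Finset (Fin (n+1))) := by
    rw [← h]
    exact Finset.mem_insert_of_mem (castSucc_mem_mapB.mpr hi)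
  rw [Finset.mem_singleton] at this
  exact (Fin.castSucc_lt_last i).ne this

lemma not_mem_of_ne_part {σ : Finpartition (Finset.univ : Finset (Fin (n+1)))}
    {C : Finset (Fin (n+1))} (hC : C ∈ σ.parts) (hne : C ≠ σ.part (Fin.last n)) :
    Fin.last n ∉ C := by
  intro h
  exact hne (σ.part_eq_of_mem hC h).symm

lemma res_extN (π : Finpartition (Finset.univ : Finset (Fin n))) : res (extN π) = π := by
  apply Finpartition.ext
  rw [res_parts]
  have himg : preparts (extN π) = insert ∅ π.parts := by
    unfold preparts
    rw [extN_parts, Finset.image_insert]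
    congr 1
    · rw [Finset.erase_singleton]
      simp [pull]
    · rw [Finset.map_eq_image, Finset.image_image]
      refine Finset.image_congr (fun B _ => ?_) |>.trans Finset.image_id
      simp only [Function.comp_apply, embB_apply, id]
      rw [Finset.erase_eq_of_notMem (last_not_mem_mapB B), pull_mapB]
  rw [himg, Finset.erase_insert]
  intro h
  exact π.bot_notMem h

lemma res_extS (π : Finpartition (Finset.univ : Finset (Fin n))) (B) (hB : B ∈ π.parts) :
    res (extS π B hB) = π := by
  apply Finpartition.ext
  rw [res_parts]
  have himg : preparts (extS π B hB) = insert B (π.parts.erase B) := by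
    unfold preparts
    rw [extS_parts, Finset.image_insert]
    congr 1
    · rw [Finset.erase_insert (last_not_mem_mapB B), pull_mapB]
    · rw [Finset.map_eq_image, Finset.image_image]
      refine Finset.image_congr (fun B' _ => ?_) |>.trans Finset.image_id
      simp only [Function.comp_apply, embB_apply, id]
      rw [Finset.erase_eq_of_notMem (last_not_mem_mapB B'), pull_mapB]
  rw [himg, Finset.insert_erase hB, Finset.erase_eq_of_notMem]
  intro h
  exact π.bot_notMem h

/-- The forward map of the bijection. -/
def Phi (p : Σ π : Finpartition (Finset.univ : Finset (Fin n)), Option {B // B ∈ π.parts}) :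
    Finpartition (Finset.univ : Finset (Fin (n+1))) :=
  match p with
  | ⟨π, none⟩ => extN π
  | ⟨π, some ⟨B, hB⟩⟩ => extS π B hB

lemma Phi_injective : Function.Injective (Phi (n := n)) := by
  rintro ⟨π, o⟩ ⟨π', o'⟩ h
  have hL : Fin.last n ∈ (Finset.univ : Finset (Fin (n+1))) := Finset.mem_univ _
  rcases o with _ | ⟨B, hB⟩ <;> rcases o' with _ | ⟨B', hB'⟩
  · -- none, none
    simp only [Phi] at h
    have hparts := congrArg Finpartition.parts h
    rw [extN_parts, extN_parts] at hparts
    have h1 : π.parts.map embB = π'.parts.map embB := by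
      have e1 := Finset.erase_insert
        (not_mem_map_embB (S := π.parts) (Finset.mem_singleton_self (Fin.last n)))
      have e2 := Finset.erase_insert
        (not_mem_map_embB (S := π'.parts) (Finset.mem_singleton_self (Fin.last n)))
      rw [← e1, ← e2, hparts]
    have : π = π' := Finpartition.ext (Finset.map_injective _ h1)
    subst this
    rfl
  · -- none, some : contradiction
    exfalso
    have h1 : (Phi ⟨π, none⟩).part (Fin.last n) = {Fin.last n} := part_extN π
    have h2 : (Phi ⟨π', some ⟨B', hB'⟩⟩).part (Fin.last n)
        = insert (Fin.last n) (mapB B') := part_extS π' B' hB'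
    rw [h] at h1
    rw [h1] at h2
    exact insert_last_ne_singleton (π'.nonempty_of_mem_parts hB') h2.symm
  · -- some, none : contradiction
    exfalso
    have h1 : (Phi ⟨π', none⟩).part (Fin.last n) = {Fin.last n} := part_extN π'
    have h2 : (Phi ⟨π, some ⟨B, hB⟩⟩).part (Fin.last n)
        = insert (Fin.last n) (mapB B) := part_extS π B hB
    rw [← h] at h1
    rw [h1] at h2
    exact insert_last_ne_singleton (π.nonempty_of_mem_parts hB) h2.symm
  · -- some, some
    simp only [Phi] at h
    have hpart : insert (Fin.last n) (mapB B) = insert (Fin.last n) (mapB B') := by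
      have h1 := part_extS π B hB
      have h2 := part_extS π' B' hB'
      rw [h] at h1
      exact h1.symm.trans h2
    have hBB' : B = B' := by
      apply mapB_injective
      have e1 := Finset.erase_insert (last_not_mem_mapB B)
      have e2 := Finset.erase_insert (last_not_mem_mapB B')
      rw [← e1, ← e2, hpart]
    subst hBB'
    have hparts := congrArg Finpartition.parts h
    rw [extS_parts, extS_parts] at hparts
    have h1 : (π.parts.erase B).map embB = (π'.parts.erase B).map embB := by
      have e1 := Finset.erase_insert
        (not_mem_map_embB (S := π.parts.erase B) (Finset.mem_insert_self (Fin.last n) (mapB B)))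
      have e2 := Finset.erase_insert
        (not_mem_map_embB (S := π'.parts.erase B) (Finset.mem_insert_self (Fin.last n) (mapB B)))
      rw [← e1, ← e2, hparts]
    have h2 : π.parts.erase B = π'.parts.erase B := Finset.map_injective _ h1
    have : π = π' := by
      apply Finpartition.ext
      rw [← Finset.insert_erase hB, ← Finset.insert_erase hB', h2]
    subst this
    rfl

lemma Phi_surjective : Function.Surjective (Phi (n := n)) := by
  intro σ
  by_cases h : σ.part (Fin.last n) = {Fin.last n}
  · refine ⟨⟨res σ, none⟩, ?_⟩
    show extN (res σ) = σ
    apply Finpartition.ext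
    rw [extN_parts]
    have hmain : (res σ).parts.map embB = σ.parts.erase {Fin.last n} := by
      ext D
      rw [Finset.mem_map, Finset.mem_erase]
      constructor
      · rintro ⟨D₀, hD₀, rfl⟩
        rw [mem_res_parts] at hD₀
        obtain ⟨hne, C, hC, rfl⟩ := hD₀
        have hCpart : C ≠ σ.part (Fin.last n) := by
          intro hCp
          rw [hCp, h, Finset.erase_singleton] at hne
          simp [pull] at hne
        have hLC : Fin.last n ∉ C := not_mem_of_ne_part hC hCpart
        rw [Finset.erase_eq_of_notMem hLC, embB_apply, mapB_pull hLC]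
        refine ⟨?_, hC⟩
        rw [← h]
        exact hCpart
      · rintro ⟨hDne, hD⟩
        have hDpart : D ≠ σ.part (Fin.last n) := fun hh => hDne (by rw [hh, h])
        have hLD : Fin.last n ∉ D := not_mem_of_ne_part hD hDpart
        refine ⟨pull D, ?_, by rw [embB_apply, mapB_pull hLD]⟩
        rw [mem_res_parts]
        refine ⟨?_, D, hD, by rw [Finset.erase_eq_of_notMem hLD]⟩
        intro hpD
        obtain ⟨z, hz⟩ := σ.nonempty_of_mem_parts hD
        have hzne : z ≠ Fin.last n := fun hzl => hLD (hzl ▸ hz)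
        obtain ⟨i, rfl⟩ := Fin.exists_castSucc_eq.mpr hzne
        have : i ∈ pull D := mem_pull.mpr hz
        rw [hpD] at this
        exact absurd this (Finset.notMem_empty i)
      -- end ext
    rw [hmain, Finset.insert_erase]
    rw [← h]
    exact σ.part_mem.2 (Finset.mem_univ _)
  · -- part of last is not the singleton
    have hmempart := σ.part_mem.2 (Finset.mem_univ (Fin.last n))
    have hLpart := σ.mem_part (Finset.mem_univ (Fin.last n))
    have hLerase : Fin.last n ∉ (σ.part (Fin.last n)).erase (Fin.last n) :=
      Finset.notMem_erase _ _
    have hB0 : mapB (pull ((σ.part (Fin.last n)).erase (Fin.last n)))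
        = (σ.part (Fin.last n)).erase (Fin.last n) := mapB_pull hLerase
    have hBne : pull ((σ.part (Fin.last n)).erase (Fin.last n)) ≠ ∅ := by
      intro hpD
      apply h
      apply Finset.Subset.antisymm
      · intro z hz
        rw [Finset.mem_singleton]
        by_contra hzne
        obtain ⟨i, rfl⟩ := Fin.exists_castSucc_eq.mpr hzne
        have : i ∈ pull ((σ.part (Fin.last n)).erase (Fin.last n)) :=
          mem_pull.mpr (Finset.mem_erase.mpr ⟨(Fin.castSucc_lt_last i).ne, hz⟩)
        rw [hpD] at this
        exact absurd this (Finset.notMem_empty i)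
      · exact Finset.singleton_subset_iff.mpr hLpart
    have hBmem : pull ((σ.part (Fin.last n)).erase (Fin.last n)) ∈ (res σ).parts := by
      rw [mem_res_parts]
      exact ⟨hBne, σ.part (Fin.last n), hmempart, rfl⟩
    refine ⟨⟨res σ, some ⟨_, hBmem⟩⟩, ?_⟩
    show extS (res σ) _ hBmem = σ
    apply Finpartition.ext
    rw [extS_parts]
    have hins : insert (Fin.last n) (mapB (pull ((σ.part (Fin.last n)).erase (Fin.last n))))
        = σ.part (Fin.last n) := by
      rw [hB0, Finset.insert_erase hLpart]
    have hmain : ((res σ).parts.erase (pull ((σ.part (Fin.last n)).erase (Fin.last n)))).map embB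
        = σ.parts.erase (σ.part (Fin.last n)) := by
      ext D
      rw [Finset.mem_map, Finset.mem_erase]
      constructor
      · rintro ⟨D₀, hD₀, rfl⟩
        rw [Finset.mem_erase, mem_res_parts] at hD₀
        obtain ⟨hD₀ne, hne, C, hC, rfl⟩ := hD₀
        have hCpart : C ≠ σ.part (Fin.last n) := by
          intro hCp
          exact hD₀ne (by rw [hCp])
        have hLC : Fin.last n ∉ C := not_mem_of_ne_part hC hCpart
        rw [Finset.erase_eq_of_notMem hLC, embB_apply, mapB_pull hLC]
        exact ⟨hCpart, hC⟩
      · rintro ⟨hDne, hD⟩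
        have hLD : Fin.last n ∉ D := not_mem_of_ne_part hD hDne
        refine ⟨pull D, ?_, by rw [embB_apply, mapB_pull hLD]⟩
        rw [Finset.mem_erase, mem_res_parts]
        have hpDne : pull D ≠ ∅ := by
          intro hpD
          obtain ⟨z, hz⟩ := σ.nonempty_of_mem_parts hD
          have hzne : z ≠ Fin.last n := fun hzl => hLD (hzl ▸ hz)
          obtain ⟨i, rfl⟩ := Fin.exists_castSucc_eq.mpr hzne
          have : i ∈ pull D := mem_pull.mpr hz
          rw [hpD] at this
          exact absurd this (Finset.notMem_empty i)
        refine ⟨?_, hpDne, D, hD, by rw [Finset.erase_eq_of_notMem hLD]⟩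
        intro heq
        apply hDne
        have : D = (σ.part (Fin.last n)).erase (Fin.last n) := by
          rw [← mapB_pull hLD, heq, hB0]
        obtain ⟨z, hz⟩ := σ.nonempty_of_mem_parts hD
        have hzpart : z ∈ σ.part (Fin.last n) := by
          rw [this] at hz
          exact Finset.mem_of_mem_erase hz
        exact σ.eq_of_mem_parts hD hmempart hz hzpart
    rw [hins, hmain, Finset.insert_erase hmempart]

end MFdB

namespace MFdB
variable {n : ℕ}

lemma prod_extN (π : Finpartition (Finset.univ : Finset (Fin n))) (g : Finset (Fin (n+1)) → ℝ) :
    ∏ C ∈ (extN π).parts, g C = g {Fin.last n} * ∏ B ∈ π.parts, g (mapB B) := by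
  rw [extN_parts, Finset.prod_insert (not_mem_map_embB (Finset.mem_singleton_self _)),
    Finset.prod_map]
  rfl

lemma prod_extS (π : Finpartition (Finset.univ : Finset (Fin n))) (B) (hB : B ∈ π.parts)
    (g : Finset (Fin (n+1)) → ℝ) :
    ∏ C ∈ (extS π B hB).parts,
      g C = g (insert (Fin.last n) (mapB B)) * ∏ C ∈ π.parts.erase B, g (mapB C) := by
  rw [extS_parts, Finset.prod_insert (not_mem_map_embB (Finset.mem_insert_self _ _)),
    Finset.prod_map]
  rfl

variable {d : ℕ}

lemma factor_mapB (a : Fin (n+1) → Fin d) (B : Finset (Fin n)) :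
    ((mapB B).sort (· ≤ ·)).map a
      = (B.sort (· ≤ ·)).map (fun i => a i.castSucc) := by
  rw [mapB, sort_map_castSucc, List.map_map]
  rfl

lemma factor_insert (a : Fin (n+1) → Fin d) (B : Finset (Fin n)) :
    ((insert (Fin.last n) (mapB B)).sort (· ≤ ·)).map a
      = ((B.sort (· ≤ ·)).map (fun i => a i.castSucc)) ++ [a (Fin.last n)] := by
  rw [sort_insert_last _ (last_not_mem_mapB B), List.map_append, factor_mapB]
  rfl

end MFdB

section Main
variable {d : ℕ} {y : (Fin d → ℝ) → ℝ} {f : ℝ → ℝ}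

lemma contDiff_iteratedDeriv_comp (hy : ContDiff ℝ (⊤ : ℕ∞) y) (hf : ContDiff ℝ (⊤ : ℕ∞) f) (m : ℕ) :
    ContDiff ℝ ((⊤ : ℕ∞) : WithTop ℕ∞) (fun t => iteratedDeriv m f (y t)) := by
  have h1 : ContDiff ℝ ((⊤ : ℕ∞) : WithTop ℕ∞) (iteratedDeriv m f) := by
    have h2 : ContDiff ℝ ((⊤ : ℕ∞) : WithTop ℕ∞) (deriv^[m] f) :=
      ContDiff.iterate_deriv m (hf.of_le (by simp))
    rw [iteratedDeriv_eq_iterate]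
    exact h2
  exact h1.comp (hy.of_le (by simp))

lemma diffAt_of_inf {k : ℕ} {g : (Fin k → ℝ) → ℝ} (h : ContDiff ℝ ((⊤ : ℕ∞) : WithTop ℕ∞) g)
    (x : Fin k → ℝ) : DifferentiableAt ℝ g x :=
  (h.differentiable (by simp)).differentiableAt

theorem faa_key (hy : ContDiff ℝ (⊤ : ℕ∞) y) (hf : ContDiff ℝ (⊤ : ℕ∞) f) :
    ∀ (n : ℕ) (a : Fin n → Fin d) (x : Fin d → ℝ),
    iterPDeriv (List.ofFn a) (fun t => f (y t)) x =
      ∑ π : Finpartition (Finset.univ : Finset (Fin n)),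
        iteratedDeriv π.parts.card f (y x) *
          ∏ B ∈ π.parts, iterPDeriv ((B.sort (· ≤ ·)).map a) y x := by
  intro n
  induction n with
  | zero =>
    intro a x
    have hu : ∀ π : Finpartition (Finset.univ : Finset (Fin 0)), π.parts = ∅ := by
      intro π
      rw [Finset.eq_empty_iff_forall_notMem]
      intro C hC
      obtain ⟨i, _⟩ := π.nonempty_of_mem_parts hC
      exact i.elim0
    have hpi : Finpartition (Finset.univ : Finset (Fin 0)) := by
      refine ⟨∅, by simp, ?_, by simp⟩
      simp [Finset.univ_eq_empty]
    haveI hss : Subsingleton (Finpartition (Finset.univ : Finset (Fin 0))) :=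
      ⟨fun π π' => Finpartition.ext (by rw [hu π, hu π'])⟩
    haveI : Unique (Finpartition (Finset.univ : Finset (Fin 0))) := uniqueOfSubsingleton hpi
    rw [Fintype.sum_unique, hu default]
    simp [List.ofFn_zero, iterPDeriv_nil, iteratedDeriv_zero]
  | succ n ih =>
    intro a x
    set a' : Fin n → Fin d := fun i => a i.castSucc with ha'
    set L := Fin.last n with hL
    -- the block factors
    set D : Finset (Fin n) → (Fin d → ℝ) → ℝ :=
      fun B => iterPDeriv ((B.sort (· ≤ ·)).map a') y with hD
    have hDsm : ∀ B, ContDiff ℝ (⊤ : ℕ∞) (D B) := fun B => contDiff_iterPDeriv _ hy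
    have hFsm : ∀ π : Finpartition (Finset.univ : Finset (Fin n)),
        ContDiff ℝ ((⊤ : ℕ∞) : WithTop ℕ∞)
          (fun t => iteratedDeriv π.parts.card f (y t) * ∏ B ∈ π.parts, D B t) :=
      fun π => (contDiff_iteratedDeriv_comp hy hf _).mul
        (contDiff_prod (fun B _ => (hDsm B).of_le (by simp)))
    -- rewrite the left-hand side using the inductive hypothesis
    have hofn : List.ofFn a = List.ofFn a' ++ [a L] := by
      rw [List.ofFn_succ', List.concat_eq_append]
    have hG : iterPDeriv (List.ofFn a') (fun t => f (y t))
        = fun t => ∑ π : Finpartition (Finset.univ : Finset (Fin n)),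
            iteratedDeriv π.parts.card f (y t) * ∏ B ∈ π.parts, D B t :=
      funext fun t => ih a' t
    rw [hofn, iterPDeriv_concat, hG]
    rw [pderiv_sum Finset.univ _ _ x (fun π _ => diffAt_of_inf (hFsm π) x)]
    -- expand each summand by the product and chain rules
    have hexp : ∀ π : Finpartition (Finset.univ : Finset (Fin n)),
        pderiv (a L) (fun t => iteratedDeriv π.parts.card f (y t) * ∏ B ∈ π.parts, D B t) x
        = iteratedDeriv (π.parts.card + 1) f (y x) * (pderiv (a L) y x * ∏ B ∈ π.parts, D B x)
          + ∑ B ∈ π.parts, iteratedDeriv π.parts.card f (y x) *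
              (pderiv (a L) (D B) x * ∏ C ∈ π.parts.erase B, D C x) := by
      intro π
      have hdU : DifferentiableAt ℝ (fun t => iteratedDeriv π.parts.card f (y t)) x :=
        diffAt_of_inf (contDiff_iteratedDeriv_comp hy hf _) x
      have hdP : DifferentiableAt ℝ (fun t => ∏ B ∈ π.parts, D B t) x :=
        diffAt_of_inf (contDiff_prod (fun B _ => (hDsm B).of_le (by simp))) x
      have hdf : DifferentiableAt ℝ (iteratedDeriv π.parts.card f) (y x) := by
        have h2 : ContDiff ℝ ((⊤ : ℕ∞) : WithTop ℕ∞) (iteratedDeriv π.parts.card f) := by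
          have h3 : ContDiff ℝ ((⊤ : ℕ∞) : WithTop ℕ∞) (deriv^[π.parts.card] f) :=
            ContDiff.iterate_deriv _ (hf.of_le (by simp))
          rw [iteratedDeriv_eq_iterate]
          exact h3
        exact (h2.differentiable (by simp)).differentiableAt
      have hdy : DifferentiableAt ℝ y x := (hy.differentiable (by simp)).differentiableAt
      rw [pderiv_mul hdU hdP (a L), pderiv_comp hdf hdy (a L),
        pderiv_finset_prod π.parts D (a L) x
          (fun B _ => ((hDsm B).differentiable (by simp)).differentiableAt),
        ← iteratedDeriv_succ, Finset.mul_sum, mul_assoc]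
    rw [Finset.sum_congr rfl (fun π _ => hexp π)]
    -- now rewrite the right-hand side via the bijection Phi
    rw [← Fintype.sum_bijective MFdB.Phi ⟨MFdB.Phi_injective, MFdB.Phi_surjective⟩
      (fun p => iteratedDeriv (MFdB.Phi p).parts.card f (y x) *
        ∏ B ∈ (MFdB.Phi p).parts, iterPDeriv ((B.sort (· ≤ ·)).map a) y x)
      _ (fun p => rfl)]
    rw [← Finset.univ_sigma_univ, Finset.sum_sigma]
    refine Finset.sum_congr rfl (fun π _ => ?_)
    rw [Fintype.sum_option]
    -- `none` term
    have hnone : iteratedDeriv (MFdB.Phi ⟨π, none⟩).parts.card f (y x) *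
        ∏ B ∈ (MFdB.Phi ⟨π, none⟩).parts, iterPDeriv ((B.sort (· ≤ ·)).map a) y x
        = iteratedDeriv (π.parts.card + 1) f (y x) *
            (pderiv (a L) y x * ∏ B ∈ π.parts, D B x) := by
      have hphi : MFdB.Phi ⟨π, none⟩ = MFdB.extN π := rfl
      rw [hphi, MFdB.extN_card, MFdB.prod_extN π (fun C => iterPDeriv ((C.sort (· ≤ ·)).map a) y x)]
      congr 1
      congr 1
      · simp [iterPDeriv]; rfl
      · exact Finset.prod_congr rfl (fun B _ => by rw [MFdB.factor_mapB])
    -- `some` terms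
    have hsome : ∀ b : {B // B ∈ π.parts},
        iteratedDeriv (MFdB.Phi ⟨π, some b⟩).parts.card f (y x) *
          ∏ C ∈ (MFdB.Phi ⟨π, some b⟩).parts, iterPDeriv ((C.sort (· ≤ ·)).map a) y x
        = iteratedDeriv π.parts.card f (y x) *
            (pderiv (a L) (D b.1) x * ∏ C ∈ π.parts.erase b.1, D C x) := by
      rintro ⟨B, hB⟩
      have hphi : MFdB.Phi ⟨π, some ⟨B, hB⟩⟩ = MFdB.extS π B hB := rfl
      rw [hphi, MFdB.extS_card, MFdB.prod_extS π B hB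
        (fun C => iterPDeriv ((C.sort (· ≤ ·)).map a) y x)]
      congr 1
      congr 1
      · rw [MFdB.factor_insert, iterPDeriv_concat]
      · exact Finset.prod_congr rfl (fun C _ => by rw [MFdB.factor_mapB])
    rw [hnone]
    congr 1
    rw [Finset.sum_congr rfl (fun b _ => hsome b)]
    rw [← Finset.sum_coe_sort π.parts
      (fun B => iteratedDeriv π.parts.card f (y x) *
        (pderiv (a L) (D B) x * ∏ C ∈ π.parts.erase B, D C x))]

end Main

/-- **Hardy's multivariate Faà di Bruno formula** for `f : ℝ → ℝ` composed with a smooth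
`y : ℝ^d → ℝ`, with respect to an arbitrary collection of indices `a 1, …, a n` (repetitions
allowed):
`∂_{a_n} ⋯ ∂_{a_1} f (y x) = ∑_{π ∈ P(n)} f^{(|π|)} (y x) * ∏_{B ∈ π} ∂^{|B|} y / ∏_{j∈B} ∂x^{a_j}`,
where the block factor is the iterated partial derivative with respect to the coordinates
`x^{a_j}`, `j ∈ B` (taken here in increasing order of `j`; the order is irrelevant by symmetry
of partial derivatives of smooth functions). -/
theorem multivariate_faa_di_bruno (d n : ℕ) (y : (Fin d → ℝ) → ℝ) (f : ℝ → ℝ)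
    (hy : ContDiff ℝ (⊤ : ℕ∞) y) (hf : ContDiff ℝ (⊤ : ℕ∞) f) (a : Fin n → Fin d) (x : Fin d → ℝ) :
    iterPDeriv (List.ofFn a) (fun t => f (y t)) x =
      ∑ π : Finpartition (Finset.univ : Finset (Fin n)),
        iteratedDeriv π.parts.card f (y x) *
          ∏ B ∈ π.parts, iterPDeriv ((B.sort (· ≤ ·)).map a) y x := by
  exact faa_key hy hf n a x
end Analytic
end

section
/- Let V = ℝ^{m_1} and W = ℝ^{m_2}, with standard bases (e_μ) of V and (ε_b) of W, and let Λ(V), Λ(W) be their exterior algebras over ℝ. Let ζ : W → Λ(V) be a linear map whose image lies in the odd part of Λ(V); since every odd element squares to zero, by the universal property of the exterior algebra there is a unique ℝ-algebra homomorphism φ : Λ(W) → Λ(V) with φ(ι(w)) = ζ(w) for all w ∈ W. Let ∂_μ denote the odd partial derivative on Λ(V), i.e. the unique antiderivation of Λ(V) extending the dual basis element e_μ^* (equivalently, left contraction by e_μ^*), and similarly ∂_b on Λ(W). Then the super chain rule holds: for every f ∈ Λ(W) and every μ ∈ {1, …, m_1}, ∂_μ(φ(f)) = Σ_{b=1}^{m_2}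 ∂_μ(ζ(ε_b)) · φ(∂_b f). -/
/-- The odd part of the `ℤ/2ℤ`-grading of the exterior algebra `Λ(V)`. -/
def ExteriorAlgebra.oddPart (V : Type*) [AddCommGroup V] [Module ℝ V] :
    Submodule ℝ (ExteriorAlgebra ℝ V) :=
  ⨆ i ∈ {i : ℕ | Odd i}, LinearMap.range (ExteriorAlgebra.ι ℝ (M := V)) ^ i

/-- The odd partial derivative `∂_μ` on the exterior algebra `Λ(ℝ^m)`: left contraction
(interior product) by the dual basis vector `e_μ^*`, i.e. the unique antiderivation with
`∂_μ ι(e_ν) = δ_μ^ν`. -/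
noncomputable def oddPDeriv {m : ℕ} (μ : Fin m) :
    ExteriorAlgebra ℝ (Fin m → ℝ) →ₗ[ℝ] ExteriorAlgebra ℝ (Fin m → ℝ) :=
  CliffordAlgebra.contractLeft (LinearMap.proj μ)

/-!
Pulling back along `φ` makes `∂_μ ∘ φ` a `φ`-twisted antiderivation of `Λ(W)`, and so is
`f ↦ ∑_b ∂_μ(ζ ε_b) φ(∂_b f)`, because every `∂_μ(ζ ε_b)` is even and hence central. Two such
maps agree once they agree on generators, where both give `∂_μ(ζ w)` by linearity of `ζ`.
-/

open CliffordAlgebra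

namespace CliffordAlgebra

variable {R M : Type*} [CommRing R] [AddCommGroup M] [Module R M] {Q : QuadraticForm R M}
  (d : Module.Dual R M)

theorem contractLeft_mul_of_mem_evenOdd_one {x : CliffordAlgebra Q} (hx : x ∈ evenOdd Q 1)
    (y : CliffordAlgebra Q) :
    contractLeft d (x * y) = contractLeft d x * y - x * contractLeft d y := by
  induction x, hx using odd_induction with
  | ι v => rw [contractLeft_ι_mul, contractLeft_ι, Algebra.smul_def]
  | add x₁ x₂ _ _ ih₁ ih₂ =>
    simp only [add_mul, map_add, ih₁, ih₂]
    abel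
  | ι_mul_ι_mul a b x _ ih =>
    rw [mul_assoc, mul_assoc, mul_assoc, contractLeft_ι_mul, contractLeft_ι_mul, ih,
      contractLeft_ι_mul, contractLeft_ι_mul]
    simp only [mul_sub, sub_mul, smul_mul_assoc, mul_smul_comm, mul_assoc]
    abel

theorem contractLeft_mem_evenOdd_zero {x : CliffordAlgebra Q} (hx : x ∈ evenOdd Q 1) :
    contractLeft d x ∈ evenOdd Q 0 := by
  have odd_mul_odd : ∀ {a b : CliffordAlgebra Q}, a ∈ evenOdd Q 1 → b ∈ evenOdd Q 1 →
      a * b ∈ evenOdd Q 0 := fun ha hb => evenOdd_mul_le Q 1 1 (Submodule.mul_mem_mul ha hb)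
  induction x, hx using odd_induction with
  | ι v =>
    rw [contractLeft_ι, Algebra.algebraMap_eq_smul_one]
    exact Submodule.smul_mem _ _ (one_le_evenOdd_zero Q (Submodule.one_le.mp le_rfl))
  | add x₁ x₂ _ _ ih₁ ih₂ => exact map_add (contractLeft d) x₁ x₂ ▸ Submodule.add_mem _ ih₁ ih₂
  | ι_mul_ι_mul a b x hx ih =>
    have hbx : ι Q b * x ∈ evenOdd Q 0 := odd_mul_odd (ι_mem_evenOdd_one Q b) hx
    have hb_dx : ι Q b * contractLeft d x ∈ evenOdd Q 1 :=
      evenOdd_mul_le Q 1 0 (Submodule.mul_mem_mul (ι_mem_evenOdd_one Q b) ih)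
    rw [mul_assoc, contractLeft_ι_mul, contractLeft_ι_mul]
    exact Submodule.sub_mem _ (Submodule.smul_mem _ _ hbx) <| odd_mul_odd (ι_mem_evenOdd_one Q a)
      (Submodule.sub_mem _ (Submodule.smul_mem _ _ hx) hb_dx)

end CliffordAlgebra

namespace ExteriorAlgebra

variable {R M : Type*} [CommRing R] [AddCommGroup M] [Module R M]

theorem commute_of_mem_evenOdd_zero {z : ExteriorAlgebra R M}
    (hz : z ∈ evenOdd (0 : QuadraticForm R M) 0) (y : ExteriorAlgebra R M) : Commute z y := by
  have h_ι : ∀ v : M, Commute z (ι R v) := fun v => by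
    simpa [map_id] using commute_map_mul_map_of_isOrtho_of_mem_evenOdd_zero_left
      (QuadraticMap.Isometry.id _) (QuadraticMap.Isometry.id _) QuadraticMap.IsOrtho.all z
      (ι R v) hz (ι_mem_evenOdd_one _ v)
  induction y using CliffordAlgebra.induction with
  | algebraMap r => exact Algebra.commute_algebraMap_right r z
  | ι v => exact h_ι v
  | mul x y hx hy => exact hx.mul_right hy
  | add x y hx hy => exact hx.add_right hy

theorem oddPart_le_evenOdd_one (V : Type*) [AddCommGroup V] [Module ℝ V] :
    oddPart V ≤ evenOdd (0 : QuadraticForm ℝ V) 1 :=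
  iSup₂_le fun i (hi : Odd i) => le_iSup (fun j : { n : ℕ // (n : ZMod 2) = 1 } =>
    LinearMap.range (CliffordAlgebra.ι (0 : QuadraticForm ℝ V)) ^ (j : ℕ))
    ⟨i, ZMod.natCast_eq_one_iff_odd.mpr hi⟩

end ExteriorAlgebra

theorem oddPDeriv_ι_mul {m : ℕ} (b : Fin m) (w : Fin m → ℝ) (x : ExteriorAlgebra ℝ (Fin m → ℝ)) :
    oddPDeriv b (ExteriorAlgebra.ι ℝ w * x) = w b • x - ExteriorAlgebra.ι ℝ w * oddPDeriv b x :=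
  contractLeft_ι_mul _ _ _

/-- **The super chain rule.** Let `ζ : ℝ^{m₂} → Λ(ℝ^{m₁})` be linear with image in the odd
part, and let `φ : Λ(ℝ^{m₂}) → Λ(ℝ^{m₁})` be the `ℝ`-algebra homomorphism with
`φ(ι w) = ζ w` (which exists uniquely since odd elements square to zero). Then for every
`f ∈ Λ(ℝ^{m₂})` and `μ`:
`∂_μ (φ f) = ∑_b ∂_μ (ζ ε_b) * φ (∂_b f)`, where `ε_b` is the `b`-th standard basis vector. -/
theorem super_chain_rule (m₁ m₂ : ℕ)
    (ζ : (Fin m₂ → ℝ) →ₗ[ℝ] ExteriorAlgebra ℝ (Fin m₁ → ℝ))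
    (hζ : ∀ w, ζ w ∈ ExteriorAlgebra.oddPart (Fin m₁ → ℝ))
    (φ : ExteriorAlgebra ℝ (Fin m₂ → ℝ) →ₐ[ℝ] ExteriorAlgebra ℝ (Fin m₁ → ℝ))
    (hφ : ∀ w, φ (ExteriorAlgebra.ι ℝ w) = ζ w)
    (f : ExteriorAlgebra ℝ (Fin m₂ → ℝ)) (μ : Fin m₁) :
    oddPDeriv μ (φ f) =
      ∑ b : Fin m₂, oddPDeriv μ (ζ (Pi.single b 1)) * φ (oddPDeriv b f) := by
  have hodd : ∀ w, ζ w ∈ evenOdd (0 : QuadraticForm ℝ (Fin m₁ → ℝ)) 1 :=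
    fun w => ExteriorAlgebra.oddPart_le_evenOdd_one _ (hζ w)
  have hDζ : ∀ w, oddPDeriv μ (ζ w) = ∑ b, w b • oddPDeriv μ (ζ (Pi.single b 1)) := fun w =>
    (congrArg (oddPDeriv μ ∘ₗ ζ) (pi_eq_sum_univ' w)).trans (by simp only [map_sum, map_smul]; rfl)
  induction f using CliffordAlgebra.left_induction with
  | algebraMap r => simp [oddPDeriv, contractLeft_algebraMap]
  | add x y hx hy => simp only [map_add, mul_add, Finset.sum_add_distrib, hx, hy]
  | ι_mul x w hx =>
    have h_central : ∀ b, Commute (oddPDeriv μ (ζ (Pi.single b 1))) (ζ w) := fun b =>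
      ExteriorAlgebra.commute_of_mem_evenOdd_zero
        (contractLeft_mem_evenOdd_zero _ (hodd (Pi.single b 1))) _
    calc oddPDeriv μ (φ (ExteriorAlgebra.ι ℝ w * x))
        = oddPDeriv μ (ζ w) * φ x - ζ w * oddPDeriv μ (φ x) := by
          rw [map_mul, hφ]
          exact contractLeft_mul_of_mem_evenOdd_one _ (hodd w) _
      _ = ∑ b, (w b • oddPDeriv μ (ζ (Pi.single b 1)) * φ x
            - ζ w * (oddPDeriv μ (ζ (Pi.single b 1)) * φ (oddPDeriv b x))) := by
          rw [hDζ, hx, Finset.sum_mul, Finset.mul_sum, Finset.sum_sub_distrib]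
      _ = _ := by
          refine Finset.sum_congr rfl fun b _ => ?_
          rw [oddPDeriv_ι_mul, map_sub, map_smul, map_mul, hφ, mul_sub, mul_smul_comm,
            smul_mul_assoc, ← mul_assoc, ← (h_central b).eq, mul_assoc]
end
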